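/- arXiv:2412.21062 — 2 statements merged into one kernel-verified Lean document; each statement's English description precedes it below -/
import Mathlib

section
/- Let real sequences $\{a^{(k)}\}$, $\{b^{(k)}\}$, $\{c^{(k)}\}$ indexed by tuples $(j_1,\ldots,j_k)\in\{1,2,3\}^k$ satisfy the recursion $a^{(k)}_{j_1,\ldots,j_k} = c^{(k)}_{j_1,\ldots,j_k} - \sum_{i=1}^{k-1} a^{(k-i)}_{j_1,\ldots,j_{k-i}} b^{(i)}_{j_{k-i+1},\ldots,j_k} - b^{(k)}_{j_1,\ldots,j_k}$, where the order-$k$ 1-norms of $b$ and $c$ obey $\sum_{\vec{j}}|c^{(k)}_{\vec{j}}| \le \frac{2^k}{k!}$, $\sum_{\vec{j}}|b^{(k)}_{\vec{j}}| \le \frac{2k}{(k!)^2}$, and $\max_{\vec{j}}|b^{(k)}_{\vec{j}}| \le \frac{1}{(k!)^2}$. If $a_1 = 0$, $a_2 = \sum_{\vec j}|a^{(2)}_{\vec j}| > 0$, then there exists a constant $\lambda > 2.5$ (independent of $k$) such that $a_k \coloneqq \sum_{\vec{j}}|a^{(k)}_{\vec{j}}| \le \lambda^{k-2} a_2$ for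 all $k \ge 3$. -/
/-!
The recursion and the triangle inequality give the convolution inequality
`a_k ≤ c_k + ∑_{0<i<k} a_{k-i} b_i + b_k` for the 1-norms, because the 1-norm of
`(j⃗ ↦ |a_{j₁…j_{k-i}}| |b_{j_{k-i+1}…j_k}|)` factors as `a_{k-i} b_i`. Since `c_k ≤ 2` and
`b_i ≤ 4 / 2^i`, strong induction gives `a_k ≤ 4^k`: the convolution is at most
`4 · 4^k · ∑_{i ≥ 1} 8^{-i} = (4/7) 4^k`. Finally `λ = 4 + 64 / a₂` satisfies `λ ≥ 4` and
`λ a₂ ≥ 4³`, which turns `a_k ≤ 4^k` into `a_k ≤ λ^{k-2} a₂`.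
-/

/-- The order-`k` 1-norm of a tuple-indexed coefficient family `f`, indexed by
tuples `(j₁,…,j_k) ∈ {1,2,3}^k` (encoded as lists over `Fin 3` of length `k`):
`∑_{j⃗} |f^{(k)}_{j⃗}|`. -/
noncomputable def tupleNorm1 (f : List (Fin 3) → ℝ) (k : ℕ) : ℝ :=
  ∑ v : Fin k → Fin 3, |f (List.ofFn v)|

open Finset
open scoped Nat

lemma Nat.two_pow_le_two_mul_factorial (n : ℕ) : 2 ^ n ≤ 2 * n ! := by
  cases n with
  | zero => simp
  | succ n =>
    have h := Nat.factorial_mul_pow_le_factorial (m := 1) (n := n)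
    rw [pow_succ, mul_comm, add_comm n 1]
    exact Nat.mul_le_mul_left 2 (by simpa using h)

lemma tupleNorm1_nonneg (f : List (Fin 3) → ℝ) (k : ℕ) : 0 ≤ tupleNorm1 f k :=
  sum_nonneg fun _ _ => abs_nonneg _

lemma tupleNorm1_mul_tupleNorm1 (f g : List (Fin 3) → ℝ) {m n k : ℕ} (h : m + n = k) :
    tupleNorm1 f m * tupleNorm1 g n =
      ∑ v : Fin k → Fin 3, |f ((List.ofFn v).take m)| * |g ((List.ofFn v).drop m)| := by
  subst h
  rw [tupleNorm1, tupleNorm1, sum_mul_sum, ← Fintype.sum_prod_type']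
  refine Fintype.sum_equiv (Fin.appendEquiv m n) _ _ fun p => ?_
  have happend : List.ofFn (Fin.appendEquiv m n p) = List.ofFn p.1 ++ List.ofFn p.2 :=
    List.ofFn_fin_append _ _
  rw [happend, List.take_left' List.length_ofFn, List.drop_left' List.length_ofFn]

lemma tupleNorm1_le_convolution (a b c : List (Fin 3) → ℝ)
    (hrec : ∀ l : List (Fin 3), 1 ≤ l.length →
      a l = c l -
        (∑ i ∈ Finset.Ico 1 l.length, a (l.take (l.length - i)) * b (l.drop (l.length - i))) -
        b l) {k : ℕ} (hk : 1 ≤ k) :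
    tupleNorm1 a k ≤ tupleNorm1 c k +
      ∑ i ∈ Ico 1 k, tupleNorm1 a (k - i) * tupleNorm1 b i + tupleNorm1 b k := by
  have hpoint (l : List (Fin 3)) (hl : l.length = k) : |a l| ≤ |c l| +
      ∑ i ∈ Ico 1 k, |a (l.take (k - i))| * |b (l.drop (k - i))| + |b l| := by
    set S := ∑ i ∈ Ico 1 k, a (l.take (k - i)) * b (l.drop (k - i))
    have hS : |S| ≤ ∑ i ∈ Ico 1 k, |a (l.take (k - i))| * |b (l.drop (k - i))| :=
      (abs_sum_le_sum_abs _ _).trans_eq (sum_congr rfl fun _ _ => abs_mul _ _)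
    rw [hrec l (hl ▸ hk), hl]
    linarith [abs_sub (c l - S) (b l), abs_sub (c l) S]
  have hsplit : ∀ i ∈ Ico 1 k, tupleNorm1 a (k - i) * tupleNorm1 b i =
      ∑ v : Fin k → Fin 3, |a ((List.ofFn v).take (k - i))| * |b ((List.ofFn v).drop (k - i))| :=
    fun i hi => tupleNorm1_mul_tupleNorm1 a b (Nat.sub_add_cancel (mem_Ico.mp hi).2.le)
  rw [sum_congr rfl hsplit, sum_comm, tupleNorm1, tupleNorm1, tupleNorm1,
    ← sum_add_distrib, ← sum_add_distrib]
  exact sum_le_sum fun v _ => hpoint _ List.length_ofFn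

lemma two_pow_div_factorial_le_two (k : ℕ) : (2 : ℝ) ^ k / k ! ≤ 2 := by
  rw [div_le_iff₀ (by positivity)]
  exact_mod_cast Nat.two_pow_le_two_mul_factorial k

lemma two_mul_div_factorial_sq_le_four_div_two_pow (k : ℕ) :
    2 * (k : ℝ) / k ! ^ 2 ≤ 4 / 2 ^ k := by
  rw [div_le_div_iff₀ (by positivity) (by positivity)]
  have hk : (k : ℝ) ≤ k ! := by exact_mod_cast Nat.self_le_factorial k
  have hpow : (2 : ℝ) ^ k ≤ 2 * k ! := by exact_mod_cast Nat.two_pow_le_two_mul_factorial k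
  nlinarith [Nat.cast_nonneg (α := ℝ) k]

lemma le_four_pow_of_le_four_add_convolution {x β : ℕ → ℝ} (hβ₀ : ∀ i, 0 ≤ β i)
    (hβ : ∀ i, β i ≤ 4 / 2 ^ i)
    (hx : ∀ k, 1 ≤ k → x k ≤ 4 + ∑ i ∈ Ico 1 k, x (k - i) * β i) :
    ∀ k, 1 ≤ k → x k ≤ 4 ^ k := by
  intro k
  induction k using Nat.strong_induction_on with
  | _ k ih =>
  intro hk
  obtain rfl | hk2 := hk.eq_or_lt
  · simpa using hx 1 le_rfl
  have hterm : ∀ i ∈ Ico 1 k, x (k - i) * β i ≤ 4 * 4 ^ k * (1 / 8) ^ i := by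
    intro i hi
    obtain ⟨hi1, hik⟩ := mem_Ico.mp hi
    have h4k : (4 : ℝ) ^ k = 4 ^ (k - i) * 4 ^ i := by rw [← pow_add, Nat.sub_add_cancel hik.le]
    calc x (k - i) * β i ≤ 4 ^ (k - i) * (4 / 2 ^ i) :=
          mul_le_mul (ih _ (by omega) (by omega)) (hβ i) (hβ₀ i) (by positivity)
      _ = 4 * 4 ^ k * (1 / 8) ^ i := by
          rw [h4k, div_pow, one_pow, show (8 : ℝ) ^ i = 4 ^ i * 2 ^ i by rw [← mul_pow]; norm_num]
          field_simp
  have hgeom : ∑ i ∈ Ico 1 k, ((1 : ℝ) / 8) ^ i ≤ 1 / 7 :=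
    (geom_sum_Ico_le_of_lt_one (by norm_num) (by norm_num)).trans_eq (by norm_num)
  have h16 : (16 : ℝ) ≤ 4 ^ k := by
    calc (16 : ℝ) = 4 ^ 2 := by norm_num
      _ ≤ 4 ^ k := pow_le_pow_right₀ (by norm_num) hk2
  calc x k ≤ 4 + 4 * 4 ^ k * ∑ i ∈ Ico 1 k, ((1 : ℝ) / 8) ^ i := by
        rw [mul_sum]; linarith [hx k hk, sum_le_sum hterm]
    _ ≤ 4 + 4 * 4 ^ k * (1 / 7) := by gcongr
    _ ≤ 4 ^ k := by linarith

lemma pow_le_pow_sub_two_mul {r lam A : ℝ} (hr : 0 ≤ r) (hrlam : r ≤ lam) (hA : r ^ 3 ≤ lam * A)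
    {k : ℕ} (hk : 3 ≤ k) : r ^ k ≤ lam ^ (k - 2) * A := by
  obtain ⟨n, rfl⟩ := Nat.exists_eq_add_of_le' hk
  calc r ^ (n + 3) = r ^ n * r ^ 3 := pow_add r n 3
    _ ≤ lam ^ n * (lam * A) :=
        mul_le_mul (pow_le_pow_left₀ hr hrlam n) hA (by positivity) (pow_nonneg (hr.trans hrlam) n)
    _ = lam ^ (n + 3 - 2) * A := by rw [show n + 3 - 2 = n + 1 by omega, pow_succ]; ring

theorem dissipative_coefficients_geometric_growth_general
    (a b c : List (Fin 3) → ℝ)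
    (hrec : ∀ l : List (Fin 3), 1 ≤ l.length →
      a l = c l -
        (∑ i ∈ Finset.Ico 1 l.length, a (l.take (l.length - i)) * b (l.drop (l.length - i))) -
        b l)
    (hc : ∀ k : ℕ, tupleNorm1 c k ≤ 2 ^ k / (Nat.factorial k))
    (hb : ∀ k : ℕ, tupleNorm1 b k ≤ 2 * k / ((Nat.factorial k) ^ 2))
    (ha2 : 0 < tupleNorm1 a 2) :
    ∃ lam : ℝ, 2.5 < lam ∧ ∀ k : ℕ, 3 ≤ k →
      tupleNorm1 a k ≤ lam ^ (k - 2) * tupleNorm1 a 2 := by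
  have hb' (k : ℕ) : tupleNorm1 b k ≤ 4 / 2 ^ k :=
    (hb k).trans (two_mul_div_factorial_sq_le_four_div_two_pow k)
  have hgrowth : ∀ k, 1 ≤ k → tupleNorm1 a k ≤ 4 ^ k := by
    refine le_four_pow_of_le_four_add_convolution (tupleNorm1_nonneg b) hb' fun k hk => ?_
    have hbk : tupleNorm1 b k ≤ 2 :=
      calc tupleNorm1 b k ≤ 4 / 2 ^ k := hb' k
        _ ≤ 4 / 2 ^ 1 := by gcongr; norm_num
        _ = 2 := by norm_num
    linarith [tupleNorm1_le_convolution a b c hrec hk, (hc k).trans (two_pow_div_factorial_le_two k)]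
  have hpos : 0 < 64 / tupleNorm1 a 2 := by positivity
  refine ⟨4 + 64 / tupleNorm1 a 2, by norm_num; linarith, fun k hk => ?_⟩
  refine (hgrowth k (by omega)).trans (pow_le_pow_sub_two_mul (by norm_num) (by linarith) ?_ hk)
  rw [add_mul, div_mul_cancel₀ _ ha2.ne']
  linarith

/-- Geometric growth bound for the dissipative-compensation coefficients (Lemma 2):
if `a^{(k)}_{j⃗} = c^{(k)}_{j⃗} - ∑_{i=1}^{k-1} a^{(k-i)}_{j₁…j_{k-i}} b^{(i)}_{j_{k-i+1}…j_k}
- b^{(k)}_{j⃗}` with `∑|c^{(k)}| ≤ 2^k/k!`, `∑|b^{(k)}| ≤ 2k/(k!)²`, `max|b^{(k)}| ≤ 1/(k!)²`,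
`a₁ = 0`, and `a₂ > 0`, then there is a constant `λ > 2.5` (independent of `k`) with
`a_k ≤ λ^{k-2} a₂` for all `k ≥ 3`. -/
theorem dissipative_coefficients_geometric_growth
    (a b c : List (Fin 3) → ℝ)
    (hrec : ∀ l : List (Fin 3), 1 ≤ l.length →
      a l = c l -
        (∑ i ∈ Finset.Ico 1 l.length, a (l.take (l.length - i)) * b (l.drop (l.length - i))) -
        b l)
    (hc : ∀ k : ℕ, tupleNorm1 c k ≤ 2 ^ k / (Nat.factorial k))
    (hb : ∀ k : ℕ, tupleNorm1 b k ≤ 2 * k / ((Nat.factorial k) ^ 2))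
    (hbmax : ∀ l : List (Fin 3), |b l| ≤ 1 / ((Nat.factorial l.length) ^ 2))
    (ha1 : tupleNorm1 a 1 = 0) (ha2 : 0 < tupleNorm1 a 2) :
    ∃ lam : ℝ, 2.5 < lam ∧ ∀ k : ℕ, 3 ≤ k →
      tupleNorm1 a k ≤ lam ^ (k - 2) * tupleNorm1 a 2 :=
  dissipative_coefficients_geometric_growth_general a b c hrec hc hb ha2
end

section
/- Let $\mathcal{L}(t)$ be a continuously differentiable superoperator-valued function on $[t_0,t_0+\tau]$ with $\max_t\|\mathcal{L}(t)\|_\diamond\le L$ and $\max_t\|\dot{\mathcal{L}}(t)\|_\diamond\le L'$. Let $\mathcal{L}_M(t)$ be the piecewise-constant approximation taking value $\mathcal{L}$ at the midpoint of each of $M$ equal slices, so that $\|\mathcal{L}_M(t)-\mathcal{L}(t)\|_\diamond \le \frac{\tau L'}{2M}$ for all $t$. Then the time-ordered evolutions satisfy $\left\|\mathcal{T}e^{\int_{t_0}^{t_0+\tau}\mathcal{L}_M(t)dt}-\mathcal{T}e^{\int_{t_0}^{t_0+\tau}\mathcal{L}(t)dt}\right\|_\diamond \le \frac{\tau^2 L'}{2M}e^{L\tau}$.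 -/
/-!
With `D = F - G` one has `D' = 𝓛 D + (𝓛_M - 𝓛) F` and `D t₀ = 0`. The mean value theorem gives
`‖𝓛_M - 𝓛‖ ≤ c := τ L' / (2M)` and Grönwall gives `‖x F t‖ ≤ e^{L (t - t₀)} ‖x‖`, so
`‖D'‖ ≤ L ‖D‖ + c e^{L (t - t₀)}`. The forcing term is resonant with the growth rate, and the
comparison function `c (t - t₀) e^{L (t - t₀)}`, which solves the equality case, bounds `‖D‖` by
a fencing argument.
-/

open Set Filter Topology

noncomputable def sliceMidpoint (t₀ τ : ℝ) (M : ℕ) (t : ℝ) : ℝ :=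
  t₀ + ((⌊(t - t₀) * M / τ⌋₊ : ℝ) + 1 / 2) * (τ / M)

section sliceMidpoint

variable {t₀ τ t : ℝ} {M : ℕ}

lemma abs_sliceMidpoint_sub_le (hτ : 0 < τ) (hM : 0 < M) (ht : t₀ ≤ t) :
    |sliceMidpoint t₀ τ M t - t| ≤ τ / (2 * M) := by
  have hu : 0 ≤ (t - t₀) * M / τ := by have := sub_nonneg.2 ht; positivity
  have h1 := Nat.floor_le hu
  have h2 := Nat.lt_floor_add_one ((t - t₀) * M / τ)
  have hh : 0 < τ / M := by positivity
  have hsub : sliceMidpoint t₀ τ M t - t =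
      (⌊(t - t₀) * M / τ⌋₊ + 1 / 2 - (t - t₀) * M / τ) * (τ / M) := by
    unfold sliceMidpoint
    field_simp
    ring
  have hfrac : |(⌊(t - t₀) * M / τ⌋₊ : ℝ) + 1 / 2 - (t - t₀) * M / τ| ≤ 1 / 2 :=
    abs_le.2 ⟨by linarith, by linarith⟩
  calc |sliceMidpoint t₀ τ M t - t|
      = |(⌊(t - t₀) * M / τ⌋₊ : ℝ) + 1 / 2 - (t - t₀) * M / τ| * (τ / M) := by
        rw [hsub, abs_mul, abs_of_pos hh]
    _ ≤ 1 / 2 * (τ / M) := by gcongr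
    _ = τ / (2 * M) := by ring

lemma sliceMidpoint_mem_Icc (hτ : 0 < τ) (hM : 0 < M) (ht : t ∈ Ico t₀ (t₀ + τ)) :
    sliceMidpoint t₀ τ M t ∈ Icc t₀ (t₀ + τ) := by
  have hu : 0 ≤ (t - t₀) * M / τ := by have := sub_nonneg.2 ht.1; positivity
  have hlt : ⌊(t - t₀) * M / τ⌋₊ < M := by
    rw [Nat.floor_lt hu, div_lt_iff₀ hτ]
    have : t - t₀ < τ := by linarith [ht.2]
    have : (0:ℝ) < M := by exact_mod_cast hM
    nlinarith
  have hk : (⌊(t - t₀) * M / τ⌋₊ : ℝ) + 1 ≤ M := by exact_mod_cast hlt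
  have hh : 0 < τ / M := by positivity
  have hMh : (M : ℝ) * (τ / M) = τ := by field_simp
  unfold sliceMidpoint
  constructor <;> nlinarith [Nat.cast_nonneg (α := ℝ) ⌊(t - t₀) * M / τ⌋₊]

end sliceMidpoint

lemma norm_le_mul_sub_mul_exp_of_norm_deriv_right_le {E : Type*} [NormedAddCommGroup E]
    [NormedSpace ℝ E] {f f' : ℝ → E} {a b K c : ℝ} (hf : ContinuousOn f (Icc a b))
    (hf' : ∀ x ∈ Ico a b, HasDerivWithinAt f (f' x) (Ici x) x) (ha : f a = 0)
    (bound : ∀ x ∈ Ico a b, ‖f' x‖ ≤ K * ‖f x‖ + c * Real.exp (K * (x - a))) :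
    ∀ x ∈ Icc a b, ‖f x‖ ≤ c * ((x - a) * Real.exp (K * (x - a))) := by
  set w : ℝ → ℝ := fun x => (x - a) * Real.exp (K * (x - a))
  have hw : ∀ x, HasDerivAt w (Real.exp (K * (x - a)) + K * w x) x := by
    intro x
    have hlin : HasDerivAt (fun s : ℝ => s - a) 1 x := (hasDerivAt_id x).sub_const a
    exact (hlin.mul (hlin.const_mul K).exp).congr_deriv (by simp only [w]; ring)
  -- for `c' > c`, `c' w` is a strict supersolution, as the fencing theorem requires; then `c' → c`
  have fence : ∀ c' > c, ∀ x ∈ Icc a b, ‖f x‖ ≤ c' * w x := by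
    intro c' hc'
    refine image_norm_le_of_norm_deriv_right_lt_deriv_boundary hf hf' (by simp [ha, w])
      (fun x => (hw x).const_mul c') fun x hx hfx => (bound x hx).trans_lt ?_
    rw [hfx]
    nlinarith [Real.exp_pos (K * (x - a))]
  intro x hx
  have hlim : Tendsto (fun c' => c' * w x) (𝓝[>] c) (𝓝 (c * w x)) :=
    ((continuous_mul_const (w x)).tendsto c).mono_left nhdsWithin_le_nhds
  exact ge_of_tendsto hlim (eventually_nhdsWithin_of_forall fun c' hc' => fence c' hc' x hx)

lemma norm_mul_le_exp_of_hasDerivAt_mul {A : Type*} [NormedRing A] [NormedAlgebra ℝ A]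
    {a F : ℝ → A} {t₀ t₁ K : ℝ} (hF : ∀ t ∈ Icc t₀ t₁, HasDerivAt F (a t * F t) t)
    (hF0 : F t₀ = 1) (ha : ∀ t ∈ Ico t₀ t₁, ‖a t‖ ≤ K) :
    ∀ t ∈ Icc t₀ t₁, ∀ x : A, ‖x * F t‖ ≤ Real.exp (K * (t - t₀)) * ‖x‖ := by
  -- `‖1‖` may exceed `1`, so we work with right multiplication by `F t`, whose initial value is
  -- the identity operator, of norm at most `1`.
  set R : A →L[ℝ] A →L[ℝ] A := (ContinuousLinearMap.mul ℝ A).flip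
  have hR : ∀ y, ‖R y‖ ≤ ‖y‖ := fun y =>
    ContinuousLinearMap.opNorm_le_bound _ (norm_nonneg y) fun x => by
      simpa [R, mul_comm ‖x‖] using norm_mul_le x y
  have hu : ∀ t ∈ Icc t₀ t₁, HasDerivAt (fun s => R (F s)) (R (a t * F t)) t :=
    fun t ht => R.hasFDerivAt.comp_hasDerivAt t (hF t ht)
  have hu0 : ‖R (F t₀)‖ ≤ 1 := by
    have hR1 : R 1 = ContinuousLinearMap.id ℝ A := by ext x; simp [R]
    rw [hF0, hR1]
    exact ContinuousLinearMap.norm_id_le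
  have hgronwall := norm_le_gronwallBound_of_norm_deriv_right_le
    (fun t ht => (hu t ht).continuousAt.continuousWithinAt)
    (fun t ht => (hu t (Ico_subset_Icc_self ht)).hasDerivWithinAt) hu0
    (fun t ht => by
      have hRmul : R (a t * F t) = (R (F t)).comp (R (a t)) := by
        ext x; simp [R, mul_assoc]
      rw [hRmul, add_zero, mul_comm K]
      exact (ContinuousLinearMap.opNorm_comp_le _ _).trans
        (mul_le_mul_of_nonneg_left ((hR _).trans (ha t ht)) (norm_nonneg _)))
  intro t ht x
  calc ‖x * F t‖ = ‖R (F t) x‖ := rfl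
    _ ≤ ‖R (F t)‖ * ‖x‖ := (R (F t)).le_opNorm x
    _ ≤ Real.exp (K * (t - t₀)) * ‖x‖ := by
      gcongr
      simpa [gronwallBound_ε0] using hgronwall t ht

lemma norm_sub_le_of_hasDerivAt_mul {A : Type*} [NormedRing A] [NormedAlgebra ℝ A]
    {a b F G : ℝ → A} {t₀ t₁ K c : ℝ}
    (hF : ∀ t ∈ Icc t₀ t₁, HasDerivAt F (a t * F t) t)
    (hG : ∀ t ∈ Icc t₀ t₁, HasDerivAt G (b t * G t) t) (hF0 : F t₀ = 1) (hG0 : G t₀ = 1)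
    (ha : ∀ t ∈ Ico t₀ t₁, ‖a t‖ ≤ K) (hb : ∀ t ∈ Ico t₀ t₁, ‖b t‖ ≤ K)
    (hab : ∀ t ∈ Ico t₀ t₁, ‖a t - b t‖ ≤ c) :
    ∀ t ∈ Icc t₀ t₁, ‖F t - G t‖ ≤ c * ((t - t₀) * Real.exp (K * (t - t₀))) := by
  have hD : ∀ t ∈ Icc t₀ t₁, HasDerivAt (fun s => F s - G s) (a t * F t - b t * G t) t :=
    fun t ht => (hF t ht).sub (hG t ht)
  refine norm_le_mul_sub_mul_exp_of_norm_deriv_right_le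
    (fun t ht => (hD t ht).continuousAt.continuousWithinAt)
    (fun t ht => (hD t (Ico_subset_Icc_self ht)).hasDerivWithinAt) (by simp [hF0, hG0])
    fun t ht => ?_
  have hsplit : a t * F t - b t * G t = b t * (F t - G t) + (a t - b t) * F t := by noncomm_ring
  calc ‖a t * F t - b t * G t‖
      ≤ ‖b t‖ * ‖F t - G t‖ + ‖(a t - b t) * F t‖ := by
        rw [hsplit]; exact (norm_add_le _ _).trans (by gcongr; exact norm_mul_le _ _)
    _ ≤ K * ‖F t - G t‖ + c * Real.exp (K * (t - t₀)) := by
        gcongr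
        · exact hb t ht
        · rw [mul_comm c]
          exact (norm_mul_le_exp_of_hasDerivAt_mul hF hF0 ha t (Ico_subset_Icc_self ht) _).trans
            (by gcongr; exact hab t ht)

lemma norm_sub_apply_sliceMidpoint_le {E : Type*} [NormedAddCommGroup E] [NormedSpace ℝ E]
    {f f' : ℝ → E} {t₀ τ t C : ℝ} {M : ℕ} (hτ : 0 < τ) (hM : 0 < M)
    (hf : ∀ s ∈ Icc t₀ (t₀ + τ), HasDerivAt f (f' s) s)
    (hf' : ∀ s ∈ Icc t₀ (t₀ + τ), ‖f' s‖ ≤ C) (ht : t ∈ Ico t₀ (t₀ + τ)) :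
    ‖f (sliceMidpoint t₀ τ M t) - f t‖ ≤ τ * C / (2 * M) := by
  have hC : 0 ≤ C := (norm_nonneg _).trans (hf' t (Ico_subset_Icc_self ht))
  calc ‖f (sliceMidpoint t₀ τ M t) - f t‖ ≤ C * ‖sliceMidpoint t₀ τ M t - t‖ :=
        (convex_Icc t₀ (t₀ + τ)).norm_image_sub_le_of_norm_hasDerivWithin_le
          (fun s hs => (hf s hs).hasDerivWithinAt) hf' (Ico_subset_Icc_self ht)
          (sliceMidpoint_mem_Icc hτ hM ht)
    _ ≤ C * (τ / (2 * M)) := by gcongr; exact abs_sliceMidpoint_sub_le hτ hM ht.1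
    _ = τ * C / (2 * M) := by ring

theorem piecewise_constant_evolution_error_general
    {A : Type*} [NormedRing A] [NormedAlgebra ℝ A]
    (𝓛 𝓛' LM F G : ℝ → A) (t₀ τ L L' : ℝ) (M : ℕ)
    (hτ : 0 < τ) (hM : 0 < M)
    (hderiv : ∀ t ∈ Set.Icc t₀ (t₀ + τ), HasDerivAt 𝓛 (𝓛' t) t)
    (hLbound : ∀ t ∈ Set.Icc t₀ (t₀ + τ), ‖𝓛 t‖ ≤ L)
    (hL'bound : ∀ t ∈ Set.Icc t₀ (t₀ + τ), ‖𝓛' t‖ ≤ L')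
    (hLM : ∀ t, LM t = 𝓛 (t₀ + ((⌊(t - t₀) * M / τ⌋₊ : ℝ) + 1 / 2) * (τ / M)))
    (hF0 : F t₀ = 1) (hG0 : G t₀ = 1)
    (hF : ∀ t ∈ Set.Icc t₀ (t₀ + τ), HasDerivAt F (LM t * F t) t)
    (hG : ∀ t ∈ Set.Icc t₀ (t₀ + τ), HasDerivAt G (𝓛 t * G t) t) :
    ‖F (t₀ + τ) - G (t₀ + τ)‖ ≤ τ ^ 2 * L' / (2 * M) * Real.exp (L * τ) := by
  have hLM_bound : ∀ t ∈ Ico t₀ (t₀ + τ), ‖LM t‖ ≤ L := fun t ht => by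
    rw [hLM]; exact hLbound _ (sliceMidpoint_mem_Icc hτ hM ht)
  have hLM_sub : ∀ t ∈ Ico t₀ (t₀ + τ), ‖LM t - 𝓛 t‖ ≤ τ * L' / (2 * M) := fun t ht => by
    rw [hLM]; exact norm_sub_apply_sliceMidpoint_le hτ hM hderiv hL'bound ht
  have key := norm_sub_le_of_hasDerivAt_mul hF hG hF0 hG0 hLM_bound
    (fun t ht => hLbound t (Ico_subset_Icc_self ht)) hLM_sub (t₀ + τ) ⟨by linarith, le_rfl⟩
  calc ‖F (t₀ + τ) - G (t₀ + τ)‖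
      ≤ τ * L' / (2 * M) * ((t₀ + τ - t₀) * Real.exp (L * (t₀ + τ - t₀))) := key
    _ = τ ^ 2 * L' / (2 * M) * Real.exp (L * τ) := by ring_nf

/-- Discretization error for time-dependent Lindbladian evolution: let `𝓛(t)` be a
continuously differentiable superoperator-valued function on `[t₀, t₀+τ]` with
`‖𝓛(t)‖_♦ ≤ L` and `‖𝓛'(t)‖_♦ ≤ L'`, and let `𝓛_M` be its piecewise-constant
midpoint approximation on `M` equal slices. If `F` and `G` are the corresponding
time-ordered evolutions, i.e. solutions of `F' = 𝓛_M F`, `G' = 𝓛 G` with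
`F(t₀) = G(t₀) = 𝟙`, then `‖F(t₀+τ) - G(t₀+τ)‖_♦ ≤ (τ² L' / (2M)) e^{Lτ}`. -/
theorem piecewise_constant_evolution_error
    {A : Type*} [NormedRing A] [NormedAlgebra ℝ A] [CompleteSpace A]
    (𝓛 𝓛' LM F G : ℝ → A) (t₀ τ L L' : ℝ) (M : ℕ)
    (hτ : 0 < τ) (hM : 0 < M) (hL0 : 0 ≤ L) (hL'0 : 0 ≤ L')
    (hderiv : ∀ t ∈ Set.Icc t₀ (t₀ + τ), HasDerivAt 𝓛 (𝓛' t) t)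
    (hLbound : ∀ t ∈ Set.Icc t₀ (t₀ + τ), ‖𝓛 t‖ ≤ L)
    (hL'bound : ∀ t ∈ Set.Icc t₀ (t₀ + τ), ‖𝓛' t‖ ≤ L')
    (hLM : ∀ t, LM t = 𝓛 (t₀ + ((⌊(t - t₀) * M / τ⌋₊ : ℝ) + 1 / 2) * (τ / M)))
    (hF0 : F t₀ = 1) (hG0 : G t₀ = 1)
    (hF : ∀ t ∈ Set.Icc t₀ (t₀ + τ), HasDerivAt F (LM t * F t) t)
    (hG : ∀ t ∈ Set.Icc t₀ (t₀ + τ), HasDerivAt G (𝓛 t * G t) t) :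
    ‖F (t₀ + τ) - G (t₀ + τ)‖ ≤ τ ^ 2 * L' / (2 * M) * Real.exp (L * τ) :=
  piecewise_constant_evolution_error_general 𝓛 𝓛' LM F G t₀ τ L L' M hτ hM hderiv hLbound hL'bound
    hLM hF0 hG0 hF hG
end
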